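/- Let α > 0 and Δ_IN > 0 be real numbers. Define E(λ₀) = (1/2)·[ (λ₀(α + Δ_IN) + α(α + Δ_IN - 2) + Δ_IN + λ₀ + 1) / √((α + λ₀ - 1)² + 4λ₀) − α + Δ_IN + 1 ] for λ₀ > 0. Then: (i) E(Δ_IN) = (1/2)·(√((α + Δ_IN + 1)² − 4α) − α + Δ_IN + 1), which is the Bayes-optimal generalisation error at zero outlier fraction; and (ii) λ₀ = Δ_IN is a critical point of E, i.e. the derivative of E with respect to λ₀ vanishes at λ₀ = Δ_IN. -/

import Mathlib

/-- The high-dimensional-limit generalisation error of ridge regression with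
regularisation λ₀ at zero outlier fraction. -/
noncomputable def ridgeGenError (α ΔIN lam0 : ℝ) : ℝ :=
  (1 / 2) * ((lam0 * (α + ΔIN) + α * (α + ΔIN - 2) + ΔIN + lam0 + 1) /
      Real.sqrt ((α + lam0 - 1) ^ 2 + 4 * lam0) - α + ΔIN + 1)

/-!
At `λ₀ = Δ_IN` the numerator of the quotient in `ridgeGenError` coincides with the radicand
`(α + λ₀ - 1)² + 4λ₀ = (α + Δ_IN + 1)² - 4α`, so the quotient is its square root. Moreover the
numerator's slope `α + Δ_IN + 1` is half the radicand's slope there, and a quotient `f / √g` with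
`f = g` and `2 f' = g'` at a point has vanishing derivative at that point.
-/

open Real

theorem HasDerivAt.div_sqrt_eq_zero {f g : ℝ → ℝ} {f' g' x : ℝ} (hf : HasDerivAt f f' x)
    (hg : HasDerivAt g g' x) (hgx : 0 < g x) (hfg : f x = g x) (hfg' : g' = 2 * f') :
    HasDerivAt (fun y => f y / √(g y)) 0 x := by
  have hsqrt : √(g x) ≠ 0 := (sqrt_pos.mpr hgx).ne'
  refine (hf.div (hg.sqrt hgx.ne') hsqrt).congr_deriv ?_
  rw [hfg, hfg', mul_div_mul_left _ _ two_ne_zero, mul_div_left_comm, div_sqrt]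
  ring

section RidgeGenError

variable (α ΔIN : ℝ)

def ridgeNumerator (lam0 : ℝ) : ℝ := lam0 * (α + ΔIN) + α * (α + ΔIN - 2) + ΔIN + lam0 + 1

def ridgeRadicand (lam0 : ℝ) : ℝ := (α + lam0 - 1) ^ 2 + 4 * lam0

theorem ridgeGenError_eq (lam0 : ℝ) :
    ridgeGenError α ΔIN lam0 =
      (1 / 2) * (ridgeNumerator α ΔIN lam0 / √(ridgeRadicand α lam0) - α + ΔIN + 1) :=
  rfl

theorem ridgeNumerator_self : ridgeNumerator α ΔIN ΔIN = ridgeRadicand α ΔIN := by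
  unfold ridgeNumerator ridgeRadicand; ring

theorem ridgeRadicand_eq : ridgeRadicand α ΔIN = (α + ΔIN + 1) ^ 2 - 4 * α := by
  unfold ridgeRadicand; ring

theorem ridgeRadicand_pos {lam0 : ℝ} (h : 0 < lam0) : 0 < ridgeRadicand α lam0 := by
  unfold ridgeRadicand; positivity

theorem hasDerivAt_ridgeNumerator (lam0 : ℝ) :
    HasDerivAt (ridgeNumerator α ΔIN) (α + ΔIN + 1) lam0 := by
  have := ((((hasDerivAt_id lam0).mul_const (α + ΔIN)).add_const (α * (α + ΔIN - 2))).add_const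
    ΔIN).add (hasDerivAt_id lam0) |>.add_const 1
  exact this.congr_deriv (by ring : _ = α + ΔIN + 1)

theorem hasDerivAt_ridgeRadicand (lam0 : ℝ) :
    HasDerivAt (ridgeRadicand α) (2 * (α + lam0 + 1)) lam0 := by
  have := ((((hasDerivAt_id lam0).const_add α).sub_const 1).pow 2).add
    ((hasDerivAt_id lam0).const_mul 4)
  exact this.congr_deriv (by simp only [id]; ring : _ = 2 * (α + lam0 + 1))

end RidgeGenError

theorem ridge_optimal_regularisation_zeroth_order_general
    (α ΔIN : ℝ) (hIN : 0 < ΔIN) :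
    ridgeGenError α ΔIN ΔIN
      = (1 / 2) * (Real.sqrt ((α + ΔIN + 1) ^ 2 - 4 * α) - α + ΔIN + 1) ∧
    HasDerivAt (fun lam0 : ℝ => ridgeGenError α ΔIN lam0) 0 ΔIN := by
  refine ⟨by rw [ridgeGenError_eq, ridgeNumerator_self, div_sqrt, ridgeRadicand_eq], ?_⟩
  have hquot := (hasDerivAt_ridgeNumerator α ΔIN ΔIN).div_sqrt_eq_zero
    (hasDerivAt_ridgeRadicand α ΔIN) (ridgeRadicand_pos α hIN) (ridgeNumerator_self α ΔIN) (by ring)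
  exact ((((hquot.sub_const α).add_const ΔIN).add_const 1).const_mul (1 / 2)).congr_deriv
    (mul_zero _)

/-- At zero outlier fraction, the ridge generalisation error evaluated at
λ₀ = Δ_IN equals the Bayes-optimal generalisation error, and λ₀ = Δ_IN is a
critical point of the ridge generalisation error. -/
theorem ridge_optimal_regularisation_zeroth_order
    (α ΔIN : ℝ) (hα : 0 < α) (hIN : 0 < ΔIN) :
    ridgeGenError α ΔIN ΔIN
      = (1 / 2) * (Real.sqrt ((α + ΔIN + 1) ^ 2 - 4 * α) - α + ΔIN + 1) ∧
    HasDerivAt (fun lam0 : ℝ => ridgeGenError α ΔIN lam0) 0 ΔIN :=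
  ridge_optimal_regularisation_zeroth_order_general α ΔIN hIN
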